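/- Under the setup of the B-DISTIL convergence analysis (uniform initialization 1/(2N), multiplicative updates with rate η ≤ 1/G, residuals bounded by G, edges γ_t at each round), the averaged ensemble F_T satisfies max_i |F_T(x_i) - g(x_i)| ≤ ln(2N)/(ηT) + η·G² - (1/T)·∑_{t=1}^T γ_t. -/

import Mathlib

/-!
Hedge over the `2N` experts `(i, ±)`, with losses `±(f_t(x_i) - g(x_i))` and weights `K_t^±`.
The normalizers telescope, so `w_{T+1}(a) · ∏ Z_t = w_1(a) · exp(-η ∑_t ℓ_t(a))`; since the final
weights form a distribution, `log ∏ Z_t ≥ log w_1(a) - η ∑_t ℓ_t(a)` for every expert `a`. On the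
other hand `exp x ≤ 1 + x + x²` for `|x| ≤ 1` and `log Z ≤ Z - 1` give
`log Z_t ≤ η²G² - η γ_t`. Applying the resulting regret bound to the experts `(i, +)` and `(i, -)`
bounds `∑_t (f_t(x_i) - g(x_i))` from both sides.
-/

open Finset Real

lemma exp_le_one_add_add_sq {x : ℝ} (hx : |x| ≤ 1) : exp x ≤ 1 + x + x ^ 2 := by
  linarith [(abs_le.mp (abs_exp_sub_one_sub_id_le hx)).2]

section Simplex

variable {α : Type*} [Fintype α]

lemma sum_mul_exp_pos {p : α → ℝ} (hp : p ∈ stdSimplex ℝ α) (c : α → ℝ) :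
    0 < ∑ a, p a * exp (c a) := by
  obtain ⟨a, -, ha⟩ : ∃ a ∈ univ, 0 < p a := by
    by_contra! h
    linarith [hp.2 ▸ sum_nonpos h]
  exact sum_pos' (fun b _ ↦ mul_nonneg (hp.1 b) (exp_pos _).le) ⟨a, mem_univ a, by positivity⟩

lemma mul_exp_div_sum_mem_stdSimplex {p : α → ℝ} (hp : p ∈ stdSimplex ℝ α) (c : α → ℝ) :
    (fun a ↦ p a * exp (c a) / ∑ b, p b * exp (c b)) ∈ stdSimplex ℝ α := by
  have hZ := sum_mul_exp_pos hp c
  refine ⟨fun a ↦ div_nonneg (mul_nonneg (hp.1 a) (exp_pos _).le) hZ.le, ?_⟩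
  rw [← sum_div, div_self hZ.ne']

lemma log_sum_mul_exp_le {p ℓ : α → ℝ} {η G : ℝ} (hp : p ∈ stdSimplex ℝ α)
    (hℓ : ∀ a, |ℓ a| ≤ G) (hη : 0 ≤ η) (hηG : η * G ≤ 1) :
    log (∑ a, p a * exp (-η * ℓ a)) ≤ η ^ 2 * G ^ 2 - η * ∑ a, p a * ℓ a := by
  have hterm : ∀ a, p a * exp (-η * ℓ a) ≤ p a - η * (p a * ℓ a) + η ^ 2 * G ^ 2 * p a := by
    intro a
    have hsmall : |-η * ℓ a| ≤ 1 := by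
      rw [abs_mul, abs_neg, abs_of_nonneg hη]
      nlinarith [hℓ a, abs_nonneg (ℓ a)]
    have hsq : (-η * ℓ a) ^ 2 ≤ η ^ 2 * G ^ 2 := by
      rw [mul_pow, neg_sq, ← sq_abs (ℓ a)]
      gcongr
      exact hℓ a
    nlinarith [exp_le_one_add_add_sq hsmall, hp.1 a]
  have hZ : ∑ a, p a * exp (-η * ℓ a) ≤ 1 - η * ∑ a, p a * ℓ a + η ^ 2 * G ^ 2 := by
    calc ∑ a, p a * exp (-η * ℓ a)
        ≤ ∑ a, (p a - η * (p a * ℓ a) + η ^ 2 * G ^ 2 * p a) := sum_le_sum fun a _ ↦ hterm a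
      _ = 1 - η * ∑ a, p a * ℓ a + η ^ 2 * G ^ 2 := by
        rw [sum_add_distrib, sum_sub_distrib, ← mul_sum, ← mul_sum, hp.2, mul_one]
  linarith [log_le_sub_one_of_pos (sum_mul_exp_pos hp (fun a ↦ -η * ℓ a))]

end Simplex

section Hedge

variable {α : Type*} {η : ℝ} {w ℓ : ℕ → α → ℝ} {Z : ℕ → ℝ} {T : ℕ}

lemma hedge_weight_mul_prod (hZ0 : ∀ t ∈ Icc 1 T, Z t ≠ 0)
    (hup : ∀ t ∈ Icc 1 T, ∀ a, w (t + 1) a = w t a * exp (-η * ℓ t a) / Z t) (a : α) :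
    ∀ t ≤ T, w (t + 1) a * ∏ s ∈ Icc 1 t, Z s = w 1 a * exp (-η * ∑ s ∈ Icc 1 t, ℓ s a) := by
  intro t ht
  induction t with
  | zero => simp
  | succ t ih =>
    have hmem : t + 1 ∈ Icc 1 T := mem_Icc.mpr ⟨by omega, ht⟩
    rw [prod_Icc_succ_top (by omega), sum_Icc_succ_top (by omega), hup _ hmem, mul_add, exp_add,
      ← mul_assoc (w 1 a), ← ih (by omega)]
    field_simp [hZ0 _ hmem]

variable [Fintype α]

lemma hedge_mem_stdSimplex (hw : w 1 ∈ stdSimplex ℝ α)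
    (hZ : ∀ t ∈ Icc 1 T, Z t = ∑ a, w t a * exp (-η * ℓ t a))
    (hup : ∀ t ∈ Icc 1 T, ∀ a, w (t + 1) a = w t a * exp (-η * ℓ t a) / Z t) :
    ∀ t ∈ Icc 1 (T + 1), w t ∈ stdSimplex ℝ α := by
  intro t ht
  obtain ⟨h1, hT⟩ := mem_Icc.mp ht
  induction t, h1 using Nat.le_induction with
  | base => exact hw
  | succ t h1 ih =>
    have ht : t ∈ Icc 1 T := mem_Icc.mpr ⟨h1, by omega⟩
    have hnext := mul_exp_div_sum_mem_stdSimplex (ih (mem_Icc.mpr ⟨h1, by omega⟩) (by omega))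
      (fun a ↦ -η * ℓ t a)
    convert hnext using 1
    funext a
    rw [hup t ht, hZ t ht]

theorem hedge_regret_le {G : ℝ} (hw : w 1 ∈ stdSimplex ℝ α)
    (hZ : ∀ t ∈ Icc 1 T, Z t = ∑ a, w t a * exp (-η * ℓ t a))
    (hup : ∀ t ∈ Icc 1 T, ∀ a, w (t + 1) a = w t a * exp (-η * ℓ t a) / Z t)
    (hℓ : ∀ t ∈ Icc 1 T, ∀ a, |ℓ t a| ≤ G) (hη : 0 < η) (hηG : η * G ≤ 1)
    {a : α} (ha : 0 < w 1 a) :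
    ∑ t ∈ Icc 1 T, ∑ b, w t b * ℓ t b - ∑ t ∈ Icc 1 T, ℓ t a ≤
      -log (w 1 a) / η + η * G ^ 2 * T := by
  have hsimplex := hedge_mem_stdSimplex hw hZ hup
  have hstep : ∀ t ∈ Icc 1 T, w t ∈ stdSimplex ℝ α := fun t ht ↦
    hsimplex t (mem_Icc.mpr ⟨(mem_Icc.mp ht).1, by have := (mem_Icc.mp ht).2; omega⟩)
  have hZpos : ∀ t ∈ Icc 1 T, 0 < Z t := fun t ht ↦
    hZ t ht ▸ sum_mul_exp_pos (hstep t ht) _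
  have hpotential : log (w 1 a) - η * ∑ t ∈ Icc 1 T, ℓ t a ≤ ∑ t ∈ Icc 1 T, log (Z t) := by
    have hlast : w (T + 1) a ≤ 1 :=
      (mem_Icc_of_mem_stdSimplex (hsimplex (T + 1) (mem_Icc.mpr ⟨by omega, le_rfl⟩)) a).2
    have hprod := hedge_weight_mul_prod (fun t ht ↦ (hZpos t ht).ne') hup a T le_rfl
    have hZprod : 0 < ∏ t ∈ Icc 1 T, Z t := prod_pos hZpos
    have hle : w 1 a * exp (-η * ∑ t ∈ Icc 1 T, ℓ t a) ≤ ∏ t ∈ Icc 1 T, Z t := by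
      rw [← hprod]
      exact mul_le_of_le_one_left hZprod.le hlast
    have := log_le_log (by positivity) hle
    rw [log_mul ha.ne' (exp_pos _).ne', log_exp, log_prod (fun t ht ↦ (hZpos t ht).ne')] at this
    linarith
  have hlogZ : ∑ t ∈ Icc 1 T, log (Z t) ≤
      ∑ t ∈ Icc 1 T, (η ^ 2 * G ^ 2 - η * ∑ b, w t b * ℓ t b) :=
    sum_le_sum fun t ht ↦ hZ t ht ▸ log_sum_mul_exp_le (hstep t ht) (hℓ t ht) hη.le hηG
  rw [sum_sub_distrib, sum_const, Nat.card_Icc, ← mul_sum, nsmul_eq_mul] at hlogZ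
  rw [div_add' _ _ _ hη.ne', le_div_iff₀ hη]
  push_cast at hlogZ
  nlinarith

end Hedge

theorem abs_sum_le_of_signed_hedge {ι : Type*} [Fintype ι] [Nonempty ι]
    {Kp Kn r : ℕ → ι → ℝ} {Z : ℕ → ℝ} {η G : ℝ} {T : ℕ}
    (hinitp : ∀ i, Kp 1 i = 1 / (2 * Fintype.card ι))
    (hinitn : ∀ i, Kn 1 i = 1 / (2 * Fintype.card ι))
    (hZ : ∀ t ∈ Icc 1 T, Z t = ∑ i, (Kp t i * exp (-η * r t i) + Kn t i * exp (η * r t i)))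
    (hupP : ∀ t ∈ Icc 1 T, ∀ i, Kp (t + 1) i = Kp t i * exp (-η * r t i) / Z t)
    (hupN : ∀ t ∈ Icc 1 T, ∀ i, Kn (t + 1) i = Kn t i * exp (η * r t i) / Z t)
    (hr : ∀ t ∈ Icc 1 T, ∀ i, |r t i| ≤ G) (hη : 0 < η) (hηG : η * G ≤ 1) (i : ι) :
    |∑ t ∈ Icc 1 T, r t i| ≤ log (2 * Fintype.card ι) / η + η * G ^ 2 * T -
      ∑ t ∈ Icc 1 T, (∑ j, Kp t j * r t j - ∑ j, Kn t j * r t j) := by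
  set w : ℕ → ι ⊕ ι → ℝ := fun t ↦ Sum.elim (Kp t) (Kn t)
  set ℓ : ℕ → ι ⊕ ι → ℝ := fun t ↦ Sum.elim (r t) (fun j ↦ -r t j)
  have hcard : (0 : ℝ) < Fintype.card ι := by exact_mod_cast Fintype.card_pos
  have hw1 : ∀ a, w 1 a = 1 / (2 * Fintype.card ι) := by
    rintro (j | j) <;> simp [w, hinitp, hinitn]
  have hw : w 1 ∈ stdSimplex ℝ (ι ⊕ ι) := by
    refine ⟨fun a ↦ by rw [hw1]; positivity, ?_⟩
    simp only [hw1, sum_const, card_univ, Fintype.card_sum, nsmul_eq_mul]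
    field_simp
    push_cast
    ring
  have hregret : ∀ a, ∑ t ∈ Icc 1 T, (∑ j, Kp t j * r t j - ∑ j, Kn t j * r t j) -
      ∑ t ∈ Icc 1 T, ℓ t a ≤ log (2 * Fintype.card ι) / η + η * G ^ 2 * T := by
    intro a
    have := hedge_regret_le (w := w) (ℓ := ℓ) (Z := Z) (T := T) (a := a) hw
      (fun t ht ↦ by simp [hZ t ht, w, ℓ, Fintype.sum_sum_type, sum_add_distrib])
      (by rintro t ht (j | j) <;> simp [w, ℓ, hupP t ht, hupN t ht])
      (by rintro t ht (j | j) <;> simp [ℓ, hr t ht j]) hη hηG (by rw [hw1]; positivity)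
    rw [hw1, one_div, log_inv, neg_neg] at this
    simpa [w, ℓ, Fintype.sum_sum_type, sub_eq_add_neg] using this
  have hp := hregret (Sum.inl i)
  have hn := hregret (Sum.inr i)
  simp only [ℓ, Sum.elim_inl, Sum.elim_inr, sum_neg_distrib] at hp hn
  exact abs_le.mpr ⟨by linarith, by linarith⟩

open Finset in
theorem bdistil_general_regression_bound
    (N T : ℕ) (hN : 1 ≤ N) (hT : 1 ≤ T)
    (f : ℕ → Fin N → ℝ) (g : Fin N → ℝ) (G : ℝ) (hG : 0 < G)
    (hbound : ∀ t ∈ Finset.Icc 1 T, ∀ i, |f t i - g i| ≤ G)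
    (η : ℝ) (hη : 0 < η) (hηG : η ≤ 1 / G)
    (Kp Kn : ℕ → Fin N → ℝ) (Z : ℕ → ℝ) (γ : ℕ → ℝ)
    (hinitp : ∀ i, Kp 1 i = 1 / (2 * N))
    (hinitn : ∀ i, Kn 1 i = 1 / (2 * N))
    (hZ : ∀ t, Z t = ∑ i, (Kp t i * Real.exp (-η * (f t i - g i)) +
      Kn t i * Real.exp (η * (f t i - g i))))
    (hupP : ∀ t ∈ Finset.Icc 1 T, ∀ i,
      Kp (t + 1) i = Kp t i * Real.exp (-η * (f t i - g i)) / Z t)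
    (hupN : ∀ t ∈ Finset.Icc 1 T, ∀ i,
      Kn (t + 1) i = Kn t i * Real.exp (η * (f t i - g i)) / Z t)
    (hγ : ∀ t, γ t = ∑ i, Kp t i * (f t i - g i) + ∑ i, Kn t i * (g i - f t i)) :
    ∀ i, |(1 / (T : ℝ)) * (∑ t ∈ Finset.Icc 1 T, f t i) - g i| ≤
      Real.log (2 * N) / (η * T) + η * G ^ 2 -
        (1 / (T : ℝ)) * ∑ t ∈ Finset.Icc 1 T, γ t := by
  intro i
  have : Nonempty (Fin N) := ⟨⟨0, hN⟩⟩
  have hS := abs_sum_le_of_signed_hedge (r := fun t j ↦ f t j - g j)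
    (fun j ↦ by rw [Fintype.card_fin, hinitp]) (fun j ↦ by rw [Fintype.card_fin, hinitn])
    (fun t _ ↦ hZ t) hupP hupN hbound hη ((le_div_iff₀ hG).mp hηG) i
  have hγ_eq : ∀ t, ∑ j, Kp t j * (f t j - g j) - ∑ j, Kn t j * (f t j - g j) = γ t := by
    intro t
    rw [hγ, sub_eq_add_neg, ← sum_neg_distrib]
    exact congrArg _ (sum_congr rfl fun j _ ↦ by ring)
  simp only [hγ_eq, Fintype.card_fin] at hS
  have hTpos : (0 : ℝ) < T := by exact_mod_cast hT
  have hmean : (1 / (T : ℝ)) * (∑ t ∈ Icc 1 T, f t i) - g i =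
      (1 / T) * ∑ t ∈ Icc 1 T, (f t i - g i) := by
    rw [sum_sub_distrib, sum_const, Nat.card_Icc, Nat.add_sub_cancel, nsmul_eq_mul]
    field_simp
  rw [hmean, abs_mul, abs_of_pos (by positivity)]
  calc 1 / (T : ℝ) * |∑ t ∈ Icc 1 T, (f t i - g i)|
      ≤ 1 / T * (log (2 * N) / η + η * G ^ 2 * T - ∑ t ∈ Icc 1 T, γ t) := by gcongr
    _ = _ := by field_simp
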